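/- Let X be a subspace of V(n). For 1 ≤ i ≤ n set Z_i := X ∩ φ_i⁻¹(span(φ_{i+1}(X) ∪ ⋯ ∪ φ_n(X))), let d_i := dim(X ∩ span{v[s,r] : i ≤ r < s ≤ n}), and let r_i := dim(Z_i). Then r_i ≤ C(d_i − r_i, 2). Moreover, if r_i > 0 and s_i is the smallest positive integer with r_i ≤ C(s_i, 2), then d_{i+1} ≤ d_i − s_i. -/

import Mathlib

open Submodule

/-- Index type for the distinguished basis of `V(n)`: pairs `(j,i)` with `i < j`. -/
abbrev VIdx (n : ℕ) := {q : Fin n × Fin n // q.2 < q.1}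

/-- Index type for the distinguished basis of `W(n)`: triples `(j,i,k)` with `i < j`, `i ≤ k`. -/
abbrev WIdx (n : ℕ) := {t : Fin n × Fin n × Fin n // t.2.1 < t.1 ∧ t.2.1 ≤ t.2.2}

/-- The vector space `V(n)` over `F`. -/
abbrev V (F : Type*) [Field F] (n : ℕ) := VIdx n → F

/-- The vector space `W(n)` over `F`. -/
abbrev W (F : Type*) [Field F] (n : ℕ) := WIdx n → F

variable (F : Type*) [Field F] (n : ℕ)

/-- The vector `v[j,i]`, with the conventions `v[i,j] = -v[j,i]` and `v[i,i] = 0`. -/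
noncomputable def v (j i : Fin n) : V F n :=
  if h : i < j then Pi.single (⟨(j, i), h⟩ : VIdx n) 1
  else if h' : j < i then -Pi.single (⟨(i, j), h'⟩ : VIdx n) 1
  else 0

/-- The vector `w[j,i,k]` (the basis vector when `i < j` and `i ≤ k`, zero otherwise). -/
noncomputable def w (j i k : Fin n) : W F n :=
  if h : i < j ∧ i ≤ k then Pi.single (⟨(j, i, k), h⟩ : WIdx n) 1 else 0

/-- The linear map `φ_k : V(n) → W(n)` determined on basis vectors by
`φ_k(v[j,i]) = w[j,i,k]` if `i ≤ k`, and `φ_k(v[j,i]) = w[j,k,i] - w[i,k,j]` if `k < i`. -/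
noncomputable def phi (k : Fin n) : V F n →ₗ[F] W F n :=
  (Pi.basisFun F (VIdx n)).constr F fun q =>
    if q.1.2 ≤ k then w F n q.1.1 q.1.2 k
    else w F n q.1.1 k q.1.2 - w F n q.1.2 k q.1.1

/-- The linear map `Φ_n : V(n)ⁿ → W(n)`, `Φ_n(x₁,…,x_n) = φ₁(x₁) + ⋯ + φ_n(x_n)`. -/
noncomputable def Phi : (Fin n → V F n) →ₗ[F] W F n :=
  ∑ k : Fin n, (phi F n k).comp (LinearMap.proj k)

/-- For `X ≤ V(n)`, the subspace `X* ≤ W(n)`: the span of `φ₁(X) ∪ ⋯ ∪ φ_n(X)`. -/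
noncomputable def starV (X : Submodule F (V F n)) : Submodule F (W F n) :=
  ⨆ k : Fin n, X.map (phi F n k)

/-- For `Y ≤ W(n)`, the subspace `Y* ≤ V(n)`: the intersection `⋂ₖ φ_k⁻¹(Y)`. -/
noncomputable def starW (Y : Submodule F (W F n)) : Submodule F (V F n) :=
  ⨅ k : Fin n, Y.comap (phi F n k)

/-- `Z_i = X ∩ φ_i⁻¹(span(φ_{i+1}(X) ∪ ⋯ ∪ φ_n(X)))`. -/
noncomputable def Zsub (X : Submodule F (V F n)) (i : Fin n) : Submodule F (V F n) :=
  X ⊓ Submodule.comap (phi F n i)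
    (⨆ j : Fin n, ⨆ _ : i < j, Submodule.map (phi F n j) X)

/-- `X ∩ span{v[s,r] : m ≤ r < s ≤ n}` (indices written 0-based, `m : ℕ`). -/
noncomputable def Dsub (X : Submodule F (V F n)) (m : ℕ) : Submodule F (V F n) :=
  X ⊓ Submodule.span F
    {x : V F n | ∃ s r : Fin n, m ≤ (r : ℕ) ∧ r < s ∧ x = v F n s r}

/-!
Identify `x ∈ V(n)` with the alternating matrix `A(x)` whose entry below the diagonal at
`(c, e)` is the coefficient of `v[c,e]`. Read coordinatewise, the relation
`φ_i(x) = ∑_{j > i} φ_j(y_j)` (`y_j ∈ X`) defining `Z_i` says that `x` has no `v[c,m]`-component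
with `m ≤ i`, and that every column of `A(x)` is the `i`-th column of the lower-triangular matrix
of some `y_e ∈ X ∩ span{v[s,r] : r ≥ i}`. So all columns of `A(x)` lie in the image `P` of
`X ∩ span{v[s,r] : r ≥ i}` under "take the `i`-th column", whose kernel there is
`X ∩ span{v[s,r] : r > i}`; thus `dim P = d_i - d_{i+1}`. Compressing an alternating matrix with
columns in `P` through a map injective on `P` gives an alternating matrix of size `dim P`, which
is determined by its entries above the diagonal, so `r_i ≤ C(d_i - d_{i+1}, 2)`. Since
`Z_i ⊆ X ∩ span{v[s,r] : r > i}`, also `r_i ≤ d_{i+1}`, and both claims follow.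
-/

open Matrix Module

section

variable {K ι : Type*} [Field K] [Fintype ι]

theorem Matrix.eq_zero_of_isAlt_of_forall_lt [LinearOrder ι] {B : Matrix ι ι K}
    (halt : B.toBilin'.IsAlt) (hlt : ∀ a b, a < b → B a b = 0) : B = 0 := by
  ext a b
  rcases lt_trichotomy a b with h | rfl | h
  · exact hlt a b h
  · simpa using halt (Pi.single a 1)
  · have hba := LinearMap.IsAlt.neg halt (Pi.single b 1) (Pi.single a 1)
    rwa [toBilin'_single, toBilin'_single, hlt b a h, neg_zero, eq_comm] at hba

theorem Submodule.finrank_map_add_finrank_inf_ker {V V₂ : Type*} [AddCommGroup V] [Module K V]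
    [AddCommGroup V₂] [Module K V₂] (f : V →ₗ[K] V₂) (S : Submodule K V) [FiniteDimensional K S] :
    finrank K (S.map f) + finrank K ↥(S ⊓ LinearMap.ker f) = finrank K S := by
  rw [← LinearMap.range_domRestrict, ← map_comap_subtype, finrank_map_subtype_eq,
    ← LinearMap.ker_domRestrict, LinearMap.finrank_range_add_finrank_ker]

theorem Matrix.eq_zero_of_mul_mul_transpose_eq_zero [DecidableEq ι] {m : Type*} [Fintype m]
    {A : Matrix ι ι K} {M : Matrix m ι K} {P : Submodule K (ι → K)} (halt : A.toBilin'.IsAlt)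
    (hA : ∀ v, A *ᵥ v ∈ P) (hM : ∀ p ∈ P, M *ᵥ p = 0 → p = 0) (h0 : M * A * Mᵀ = 0) :
    A = 0 := by
  have hAM : ∀ u, A *ᵥ (Mᵀ *ᵥ u) = 0 := fun u =>
    hM _ (hA _) (by rw [mulVec_mulVec, mulVec_mulVec, h0, zero_mulVec])
  have hA0 : ∀ w, A *ᵥ w = 0 := fun w => by
    refine hM _ (hA w) (dotProduct_eq_zero _ fun u => ?_)
    rw [dotProduct_comm, dotProduct_mulVec, ← mulVec_transpose, ← toBilin'_apply',
      ← LinearMap.IsAlt.neg halt w, toBilin'_apply', hAM, dotProduct_zero, neg_zero]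
  exact ext_of_mulVec_single fun j => by rw [hA0, zero_mulVec]

theorem Matrix.finrank_le_choose_two_of_isAlt [DecidableEq ι] {S : Submodule K (Matrix ι ι K)}
    {P : Submodule K (ι → K)} (halt : ∀ A ∈ S, A.toBilin'.IsAlt)
    (hcol : ∀ A ∈ S, ∀ j, Aᵀ j ∈ P) :
    finrank K S ≤ (finrank K P).choose 2 := by
  set k := finrank K P
  obtain ⟨g, hg⟩ := LinearMap.exists_extend (Module.finBasis K P).equivFun.toLinearMap
  set M := LinearMap.toMatrix' g
  have hM : ∀ p ∈ P, M *ᵥ p = 0 → p = 0 := by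
    intro p hp h0
    have h := LinearMap.congr_fun hg ⟨p, hp⟩
    rw [LinearMap.comp_apply, Submodule.subtype_apply, ← LinearMap.toMatrix'_mulVec, h0] at h
    simpa using h.symm
  have hmem : ∀ A ∈ S, ∀ v, A *ᵥ v ∈ P := fun A hA v => by
    rw [← mulVecLin_apply]
    refine (span_le.mpr ?_) ((range_mulVecLin A).le (LinearMap.mem_range_self _ v))
    rintro _ ⟨j, rfl⟩
    exact hcol A hA j
  let Λ : S →ₗ[K] ({x : Fin k × Fin k // x.1 < x.2} → K) :=
    { toFun := fun A x => (M * (A : Matrix ι ι K) * Mᵀ) x.1.1 x.1.2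
      map_add' := fun A B => by ext; simp [Matrix.mul_add, Matrix.add_mul]
      map_smul' := fun c A => by ext; simp }
  have hinj : Function.Injective Λ := by
    rw [← LinearMap.ker_eq_bot, eq_bot_iff]
    rintro ⟨A, hA⟩ h0
    have hB : M * A * Mᵀ = 0 := by
      refine eq_zero_of_isAlt_of_forall_lt (fun u => ?_)
        (fun a b hab => congrFun (LinearMap.mem_ker.mp h0) ⟨(a, b), hab⟩)
      rw [← transpose_transpose M, ← toBilin'_comp, transpose_transpose]
      exact halt A hA _
    rw [Submodule.mem_bot, Submodule.mk_eq_zero]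
    exact eq_zero_of_mul_mul_transpose_eq_zero (halt A hA) (hmem A hA) hM hB
  calc finrank K S ≤ finrank K ({x : Fin k × Fin k // x.1 < x.2} → K) :=
        LinearMap.finrank_le_finrank_of_injective hinj
    _ = k.choose 2 := by
      rw [Module.finrank_fintype_fun_eq_card, Fintype.card_subtype, Fintype.card_product_filter_lt,
        Fintype.card_fin]

end

noncomputable def lowerMatrix : V F n →ₗ[F] Matrix (Fin n) (Fin n) F where
  toFun x := Matrix.of fun c e => if h : e < c then x ⟨(c, e), h⟩ else 0
  map_add' x y := by ext c e; by_cases h : e < c <;> simp [h]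
  map_smul' a x := by ext c e; by_cases h : e < c <;> simp [h]

noncomputable def altMatrix : V F n →ₗ[F] Matrix (Fin n) (Fin n) F where
  toFun x := lowerMatrix F n x - (lowerMatrix F n x)ᵀ
  map_add' x y := by simp only [map_add, transpose_add]; abel
  map_smul' a x := by simp only [map_smul, transpose_smul, smul_sub, RingHom.id_apply]

variable {F n}

theorem lowerMatrix_apply (x : V F n) (c e : Fin n) :
    lowerMatrix F n x c e = if h : e < c then x ⟨(c, e), h⟩ else 0 := rfl

theorem altMatrix_apply (x : V F n) (c e : Fin n) :
    altMatrix F n x c e = lowerMatrix F n x c e - lowerMatrix F n x e c := rfl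

theorem w_apply (a b d : Fin n) (t : WIdx n) :
    w F n a b d t = if b < a ∧ b ≤ d ∧ t.1 = (a, b, d) then 1 else 0 := by
  by_cases h : b < a ∧ b ≤ d
  · simp [w, h, Pi.single_apply, Subtype.ext_iff]
  · simp [w, h]
    tauto

theorem phi_single (j : Fin n) (q : VIdx n) (a : F) :
    phi F n j (Pi.single q a) =
      a • if q.1.2 ≤ j then w F n q.1.1 q.1.2 j else w F n q.1.1 j q.1.2 - w F n q.1.2 j q.1.1 := by
  rw [phi, Module.Basis.constr_apply_fintype,
    Finset.sum_eq_single q (fun b _ hb => by simp [hb]) (by simp)]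
  simp

theorem phi_apply (j : Fin n) (z : V F n) {c m e : Fin n} (h : m < c ∧ m ≤ e) :
    phi F n j z ⟨(c, m, e), h⟩ =
      (if e = j then z ⟨(c, m), h.1⟩ else 0) +
        (if m = j ∧ j < e then altMatrix F n z c e else 0) := by
  induction z using Pi.single_induction with
  | zero => simp
  | add z z' hz hz' =>
    simp only [map_add, Pi.add_apply, Matrix.add_apply, hz, hz']
    split_ifs <;> ring
  | single q a =>
    obtain ⟨⟨a₁, a₂⟩, hq⟩ := q
    rw [phi_single]
    simp only [ite_apply, Pi.smul_apply, Pi.sub_apply, w_apply, altMatrix_apply, lowerMatrix_apply,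
      Pi.single_apply, Subtype.ext_iff, Prod.ext_iff]
    split_ifs
    all_goals first
      | (simp only [smul_eq_mul]; ring1)
      | (exfalso; simp only [Fin.lt_def, Fin.le_def, Fin.ext_iff] at *; omega)

theorem sum_phi_apply (s : Finset (Fin n)) (y : Fin n → V F n) {c m e : Fin n}
    (h : m < c ∧ m ≤ e) :
    (∑ j ∈ s, phi F n j (y j)) ⟨(c, m, e), h⟩ =
      (if e ∈ s then y e ⟨(c, m), h.1⟩ else 0) +
        (if m ∈ s ∧ m < e then altMatrix F n (y m) c e else 0) := by
  simp only [Finset.sum_apply, phi_apply, Finset.sum_add_distrib, ite_and,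
    Finset.sum_ite_eq]

theorem isAlt_altMatrix (x : V F n) : (altMatrix F n x).toBilin'.IsAlt := by
  intro v
  rw [toBilin'_apply', altMatrix, LinearMap.coe_mk, AddHom.coe_mk, sub_mulVec, dotProduct_sub,
    dotProduct_mulVec v _ᵀ, vecMul_transpose, dotProduct_comm, sub_self]

theorem altMatrix_injective : Function.Injective (altMatrix F n) := by
  rw [← LinearMap.ker_eq_bot, eq_bot_iff]
  intro x hx
  ext ⟨⟨c, e⟩, h⟩
  have hce : altMatrix F n x c e = 0 := by rw [LinearMap.mem_ker.mp hx]; rfl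
  simpa [altMatrix_apply, lowerMatrix_apply, h, not_lt.2 h.le] using hce

variable (F n) in
def supportedFrom (m : ℕ) : Submodule F (V F n) :=
  Submodule.pi {q | (q.1.2 : ℕ) < m} fun _ => ⊥

theorem mem_supportedFrom {m : ℕ} {x : V F n} :
    x ∈ supportedFrom F n m ↔ ∀ q : VIdx n, (q.1.2 : ℕ) < m → x q = 0 := by
  simp [supportedFrom, Submodule.mem_pi]

theorem span_v_eq_supportedFrom (m : ℕ) :
    span F {x : V F n | ∃ s r : Fin n, m ≤ (r : ℕ) ∧ r < s ∧ x = v F n s r} =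
      supportedFrom F n m := by
  apply le_antisymm
  · rw [span_le]
    rintro _ ⟨s, r, hmr, hrs, rfl⟩
    rw [SetLike.mem_coe, mem_supportedFrom]
    intro q hq
    rw [v, dif_pos hrs, Pi.single_apply, if_neg]
    rintro rfl
    exact absurd hq (not_lt.2 hmr)
  · intro x hx
    rw [← Finset.univ_sum_single x]
    refine sum_mem fun q _ => ?_
    by_cases hq : (q.1.2 : ℕ) < m
    · simp [mem_supportedFrom.mp hx q hq]
    · have hv : Pi.single q (x q) = x q • v F n q.1.1 q.1.2 := by
        rw [v, dif_pos q.2, ← Pi.single_smul, smul_eq_mul, mul_one]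
      rw [hv]
      exact smul_mem _ _ (subset_span ⟨q.1.1, q.1.2, not_lt.1 hq, q.2, rfl⟩)

theorem dsub_eq (X : Submodule F (V F n)) (m : ℕ) : Dsub F n X m = X ⊓ supportedFrom F n m := by
  rw [Dsub, span_v_eq_supportedFrom]

theorem altMatrix_eq_zero_of_mem_supportedFrom {m : ℕ} {x : V F n} (hx : x ∈ supportedFrom F n m)
    {c e : Fin n} (h : (c : ℕ) < m ∨ (e : ℕ) < m) : altMatrix F n x c e = 0 := by
  rw [mem_supportedFrom] at hx
  simp only [altMatrix_apply, lowerMatrix_apply]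
  split_ifs with h₁ h₂ h₂
  · exact absurd h₁ (asymm h₂)
  · rw [hx ⟨(c, e), h₁⟩ (by dsimp only; omega), sub_zero]
  · rw [hx ⟨(e, c), h₂⟩ (by dsimp only; omega), sub_zero]
  · rw [sub_zero]

variable (F n) in
noncomputable def lowerCol (i : Fin n) : V F n →ₗ[F] Fin n → F where
  toFun z := (lowerMatrix F n z)ᵀ i
  map_add' _ _ := by ext; simp
  map_smul' _ _ := by ext; simp

theorem lowerCol_apply (i : Fin n) (z : V F n) (c : Fin n) :
    lowerCol F n i z c = if h : i < c then z ⟨(c, i), h⟩ else 0 := rfl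

theorem supportedFrom_inf_ker_lowerCol (i : Fin n) :
    supportedFrom F n i ⊓ LinearMap.ker (lowerCol F n i) = supportedFrom F n (i + 1) := by
  ext z
  simp only [mem_inf, LinearMap.mem_ker, mem_supportedFrom, funext_iff, lowerCol_apply,
    Pi.zero_apply]
  constructor
  · rintro ⟨hz, hcol⟩ ⟨⟨c, m⟩, hmc⟩ hm
    rcases Nat.lt_succ_iff_lt_or_eq.mp hm with hm | hm
    · exact hz _ hm
    · obtain rfl : m = i := Fin.ext hm
      simpa [hmc] using hcol c
  · intro hz
    refine ⟨fun q hq => hz q (by omega), fun c => ?_⟩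
    split_ifs with h
    · exact hz _ (by dsimp only; omega)
    · rfl

theorem finrank_map_lowerCol_add (X : Submodule F (V F n)) (i : Fin n) :
    finrank F ((X ⊓ supportedFrom F n i).map (lowerCol F n i)) +
        finrank F ↥(X ⊓ supportedFrom F n (i + 1)) =
      finrank F ↥(X ⊓ supportedFrom F n i) := by
  rw [← supportedFrom_inf_ker_lowerCol, ← inf_assoc, finrank_map_add_finrank_inf_ker]

theorem exists_phi_eq_sum_of_mem_zsub {X : Submodule F (V F n)} {i : Fin n} {x : V F n}
    (hx : x ∈ Zsub F n X i) :
    ∃ y : Fin n → V F n, (∀ j, y j ∈ X) ∧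
      phi F n i x = ∑ j ∈ Finset.Ioi i, phi F n j (y j) := by
  have h := mem_comap.mp (mem_inf.mp hx).2
  simp_rw [← Finset.mem_Ioi] at h
  obtain ⟨μ, hμ⟩ := (mem_iSup_finset_iff_exists_sum _ _).mp h
  choose y hy hyμ using fun j => mem_map.mp (μ j).2
  exact ⟨y, hy, by simp only [hyμ, hμ]⟩

theorem zsub_le_supportedFrom (X : Submodule F (V F n)) (i : Fin n) :
    Zsub F n X i ≤ X ⊓ supportedFrom F n (i + 1) := by
  intro x hx
  obtain ⟨y, -, hy⟩ := exists_phi_eq_sum_of_mem_zsub hx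
  refine mem_inf.mpr ⟨(mem_inf.mp hx).1, mem_supportedFrom.mpr ?_⟩
  rintro ⟨⟨c, m⟩, hmc⟩ hm
  have hmi : m ≤ i := Fin.le_def.mpr (Nat.lt_succ_iff.mp hm)
  have hcoord := congrFun hy ⟨(c, m, i), hmc, hmi⟩
  rw [phi_apply, sum_phi_apply] at hcoord
  simpa [not_lt.mpr hmi] using hcoord

theorem col_altMatrix_mem_of_mem_zsub {X : Submodule F (V F n)} {i : Fin n} {x : V F n}
    (hx : x ∈ Zsub F n X i) (e : Fin n) :
    (altMatrix F n x)ᵀ e ∈ (X ⊓ supportedFrom F n i).map (lowerCol F n i) := by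
  have hx₁ := (mem_inf.mp (zsub_le_supportedFrom X i hx)).2
  by_cases hie : i < e
  swap
  · convert Submodule.zero_mem _
    ext c
    exact altMatrix_eq_zero_of_mem_supportedFrom hx₁ (Or.inr (by omega))
  obtain ⟨y, hyX, hy⟩ := exists_phi_eq_sum_of_mem_zsub hx
  have hcoord : ∀ {c m : Fin n} (h : m < c ∧ m ≤ e),
      (if m = i then altMatrix F n x c e else 0) =
        y e ⟨(c, m), h.1⟩ + (if i < m ∧ m < e then altMatrix F n (y m) c e else 0) := by
    intro c m h
    have := congrFun hy ⟨(c, m, e), h⟩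
    rw [phi_apply, sum_phi_apply] at this
    simpa [hie, hie.ne', ite_and] using this
  refine ⟨y e, mem_inf.mpr ⟨hyX e, mem_supportedFrom.mpr ?_⟩, ?_⟩
  · rintro ⟨⟨c, m⟩, hmc⟩ hm
    have hmi : m < i := hm
    simpa [hmi.ne, not_lt.mpr hmi.le] using (hcoord ⟨hmc, (hmi.trans hie).le⟩).symm
  · ext c
    rw [lowerCol_apply, transpose_apply]
    split_ifs with hic
    · simpa using (hcoord ⟨hic, hie.le⟩).symm
    · exact (altMatrix_eq_zero_of_mem_supportedFrom hx₁ (Or.inl (by omega))).symm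

theorem finrank_zsub_le_choose (X : Submodule F (V F n)) (i : Fin n) :
    finrank F (Zsub F n X i) ≤
      (finrank F ((X ⊓ supportedFrom F n i).map (lowerCol F n i))).choose 2 := by
  rw [(equivMapOfInjective _ altMatrix_injective (Zsub F n X i)).finrank_eq]
  refine Matrix.finrank_le_choose_two_of_isAlt ?_ ?_
  · rintro _ ⟨x, -, rfl⟩
    exact isAlt_altMatrix x
  · rintro _ ⟨x, hx, rfl⟩ e
    exact col_altMatrix_mem_of_mem_zsub hx e

theorem statement12_general (p : ℕ) [Fact p.Prime] (n : ℕ)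
    (X : Submodule (ZMod p) (V (ZMod p) n)) (i : Fin n) :
    Module.finrank (ZMod p) ↥(Zsub (ZMod p) n X i) ≤
      (Module.finrank (ZMod p) ↥(Dsub (ZMod p) n X (i : ℕ)) -
        Module.finrank (ZMod p) ↥(Zsub (ZMod p) n X i)).choose 2 ∧
    (0 < Module.finrank (ZMod p) ↥(Zsub (ZMod p) n X i) →
      ∀ s : ℕ, 0 < s →
        Module.finrank (ZMod p) ↥(Zsub (ZMod p) n X i) ≤ s.choose 2 →
        (∀ s' : ℕ, 0 < s' →
          Module.finrank (ZMod p) ↥(Zsub (ZMod p) n X i) ≤ s'.choose 2 → s ≤ s') →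
        Module.finrank (ZMod p) ↥(Dsub (ZMod p) n X ((i : ℕ) + 1)) ≤
          Module.finrank (ZMod p) ↥(Dsub (ZMod p) n X (i : ℕ)) - s) := by
  have hZ := finrank_zsub_le_choose X i
  have hrank := finrank_map_lowerCol_add X i
  have hZD := Submodule.finrank_mono (zsub_le_supportedFrom X i)
  rw [dsub_eq, dsub_eq]
  refine ⟨hZ.trans (Nat.choose_le_choose 2 (by omega)), fun hr s _ _ hmin => ?_⟩
  have hk : 0 < finrank (ZMod p) ((X ⊓ supportedFrom (ZMod p) n i).map (lowerCol (ZMod p) n i)) :=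
    Nat.pos_of_ne_zero fun h0 => by rw [h0, Nat.choose_zero_succ] at hZ; omega
  have := hmin _ hk hZ
  omega

/-- With `r_i = dim Z_i` and `d_i = dim(X ∩ span{v[s,r] : i ≤ r < s ≤ n})`, one has
`r_i ≤ C(d_i − r_i, 2)`; moreover if `r_i > 0` and `s_i` is the smallest positive integer
with `r_i ≤ C(s_i,2)`, then `d_{i+1} ≤ d_i − s_i`. -/
theorem statement12 (p : ℕ) [Fact p.Prime] (hp2 : p ≠ 2) (n : ℕ) (hn : 1 < n)
    (X : Submodule (ZMod p) (V (ZMod p) n)) (i : Fin n) :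
    Module.finrank (ZMod p) ↥(Zsub (ZMod p) n X i) ≤
      (Module.finrank (ZMod p) ↥(Dsub (ZMod p) n X (i : ℕ)) -
        Module.finrank (ZMod p) ↥(Zsub (ZMod p) n X i)).choose 2 ∧
    (0 < Module.finrank (ZMod p) ↥(Zsub (ZMod p) n X i) →
      ∀ s : ℕ, 0 < s →
        Module.finrank (ZMod p) ↥(Zsub (ZMod p) n X i) ≤ s.choose 2 →
        (∀ s' : ℕ, 0 < s' →
          Module.finrank (ZMod p) ↥(Zsub (ZMod p) n X i) ≤ s'.choose 2 → s ≤ s') →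
        Module.finrank (ZMod p) ↥(Dsub (ZMod p) n X ((i : ℕ) + 1)) ≤
          Module.finrank (ZMod p) ↥(Dsub (ZMod p) n X (i : ℕ)) - s) :=
  statement12_general p n X i
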